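/- arXiv:2110.04464 — 4 statements merged into one kernel-verified Lean document; each statement's English description precedes it below -/
import Mathlib

section
/- For the path P_n on n vertices, peri(P_n) = n(n−2)/2 when n is even, and peri(P_n) = (n−1)²/2 when n is odd. -/
open SimpleGraph Finset

attribute [local instance] Classical.propDecidable

noncomputable section

/-- `closerCount G u v` is the number of vertices of `G` strictly closer to `u` than to `v`. -/
def closerCount {V : Type*} [Fintype V] (G : SimpleGraph V) (u v : V) : ℕ :=
  (Finset.univ.filter fun w => G.dist w u < G.dist w v).card

/-- The Mostar index of a graph. -/
def mostar {V : Type*} [Fintype V] (G : SimpleGraph V) : ℤ :=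
  ∑ e ∈ G.edgeFinset,
    Sym2.lift ⟨fun u v => |(closerCount G u v : ℤ) - (closerCount G v u : ℤ)|,
      fun _ _ => abs_sub_comm _ _⟩ e

/-- Number of pendent vertices strictly closer to `u` than to `v`. -/
def pendentCloserCount {V : Type*} [Fintype V] (G : SimpleGraph V) (u v : V) : ℕ :=
  (Finset.univ.filter fun w => G.degree w = 1 ∧ G.dist w u < G.dist w v).card

/-- The terminal Mostar index of a graph. -/
def terminalMostar {V : Type*} [Fintype V] (G : SimpleGraph V) : ℤ :=
  ∑ e ∈ G.edgeFinset,
    Sym2.lift ⟨fun u v => |(pendentCloserCount G u v : ℤ) - (pendentCloserCount G v u : ℤ)|,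
      fun _ _ => abs_sub_comm _ _⟩ e

/-- The irregularity of a graph. -/
def irreg {V : Type*} [Fintype V] (G : SimpleGraph V) : ℤ :=
  ∑ e ∈ G.edgeFinset,
    Sym2.lift ⟨fun u v => |(G.degree u : ℤ) - (G.degree v : ℤ)|,
      fun _ _ => abs_sub_comm _ _⟩ e

/-- The total Mostar index of a graph. -/
def totalMostar {V : Type*} [Fintype V] (G : SimpleGraph V) : ℤ :=
  ∑ e ∈ Finset.univ.sym2.filter (fun e => ¬ e.IsDiag),
    Sym2.lift ⟨fun u v => |(closerCount G u v : ℤ) - (closerCount G v u : ℤ)|,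
      fun _ _ => abs_sub_comm _ _⟩ e

/-- The sum peripherality of a vertex. -/
def sprVertex {V : Type*} [Fintype V] (G : SimpleGraph V) (v : V) : ℕ :=
  ∑ u ∈ Finset.univ.erase v, closerCount G u v

/-- The sum peripherality of a graph. -/
def spr {V : Type*} [Fintype V] (G : SimpleGraph V) : ℕ :=
  ∑ v, sprVertex G v

/-- The peripherality of a vertex. -/
def periVertex {V : Type*} [Fintype V] (G : SimpleGraph V) (v : V) : ℕ :=
  (Finset.univ.filter fun u => u ≠ v ∧ closerCount G v u < closerCount G u v).card

/-- The peripherality of a graph. -/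
def peri {V : Type*} [Fintype V] (G : SimpleGraph V) : ℕ :=
  ∑ v, periVertex G v

/-- The edge peripherality of the edge `{u, v}`. -/
def edgePeri {V : Type*} [Fintype V] (G : SimpleGraph V) (u v : V) : ℕ :=
  (Finset.univ.filter fun x => x ≠ u ∧ x ≠ v ∧
    closerCount G u x < closerCount G x u ∧ closerCount G v x < closerCount G x v).card

/-- The edge degree of the edge `{u, v}`. -/
def edgeDeg {V : Type*} [Fintype V] (G : SimpleGraph V) (u v : V) : ℕ :=
  (Finset.univ.filter fun x => x ≠ u ∧ x ≠ v ∧ (G.Adj x u ∨ G.Adj x v)).card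

/-- The eccentricity of a vertex. -/
def ecc {V : Type*} [Fintype V] (G : SimpleGraph V) (w : V) : ℕ :=
  Finset.univ.sup fun v => G.dist w v

/-- The spider graph with `k` legs whose lengths are given by `L`: the center is `none`,
and `some ⟨i, j⟩` is the `j`-th vertex (counted from the center) on leg `i`. -/
def spider (k : ℕ) (L : Fin k → ℕ) : SimpleGraph (Option ((i : Fin k) × Fin (L i))) :=
  SimpleGraph.fromRel fun u v =>
    (∃ (i : Fin k) (j : Fin (L i)), u = none ∧ v = some ⟨i, j⟩ ∧ (j : ℕ) = 0) ∨
    (∃ (i : Fin k) (j j' : Fin (L i)), u = some ⟨i, j⟩ ∧ v = some ⟨i, j'⟩ ∧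
      (j' : ℕ) = (j : ℕ) + 1)

/-- The full `m`-ary tree of depth `d`: vertex `⟨i, j⟩` is the `j`-th vertex at depth `i`, and
its parent is vertex `⟨i - 1, j / m⟩`. -/
def fullAryTree (m d : ℕ) : SimpleGraph ((i : Fin (d + 1)) × Fin (m ^ (i : ℕ))) :=
  SimpleGraph.fromRel fun u v =>
    (u.1 : ℕ) + 1 = (v.1 : ℕ) ∧ (v.2 : ℕ) / m = (u.2 : ℕ)


/-!
Swapping the two entries of an ordered pair of vertices exchanges the pairs counted by `peri` with
those counted the other way round, so in every finite graph
`2 peri(G) + #{(u, v) | n(u, v) = n(v, u)} = |V|²`.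
In `P_n` the distance is `|i - j|`, and `n(i, j) = n(j, i)` exactly when `i = j` or
`i + j = n - 1`; there are `2n - (n mod 2)` such ordered pairs.
-/

section Peri

variable {V : Type*} [Fintype V] (G : SimpleGraph V)

lemma periVertex_eq_card_filter (v : V) :
    periVertex G v = #{u | closerCount G v u < closerCount G u v} := by
  refine congrArg card (filter_congr fun u _ => and_iff_right_of_imp ?_)
  rintro h rfl
  exact h.false

lemma peri_eq_card_filter :
    peri G = #{p : V × V | closerCount G p.1 p.2 < closerCount G p.2 p.1} := by
  simp only [peri, periVertex_eq_card_filter, card_filter, Fintype.sum_prod_type]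

theorem two_mul_peri_add_card_filter_closerCount_eq :
    2 * peri G + #{p : V × V | closerCount G p.1 p.2 = closerCount G p.2 p.1} =
      Fintype.card V ^ 2 := by
  have hswap : #{p : V × V | closerCount G p.2 p.1 < closerCount G p.1 p.2} = peri G := by
    rw [peri_eq_card_filter]
    exact card_equiv (Equiv.prodComm V V) (by simp)
  calc 2 * peri G + #{p : V × V | closerCount G p.1 p.2 = closerCount G p.2 p.1}
      = #{p : V × V | closerCount G p.1 p.2 < closerCount G p.2 p.1} +
          #{p : V × V | closerCount G p.2 p.1 < closerCount G p.1 p.2} +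
          #{p : V × V | closerCount G p.1 p.2 = closerCount G p.2 p.1} := by
        rw [hswap, ← peri_eq_card_filter, two_mul]
    _ = ∑ _p : V × V, 1 := by
        simp only [card_filter, ← sum_add_distrib]
        refine sum_congr rfl fun p _ => ?_
        split_ifs <;> omega
    _ = Fintype.card V ^ 2 := by simp [sq]

end Peri

namespace SimpleGraph

variable {n : ℕ}

lemma pathGraph_exists_walk_length_eq (u v : Fin n) (h : (u : ℕ) ≤ v) :
    ∃ p : (pathGraph n).Walk u v, p.length = v - u := by
  induction hk : (v : ℕ) - u generalizing u with
  | zero =>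
    obtain rfl : u = v := Fin.ext (by omega)
    exact ⟨.nil, rfl⟩
  | succ k ih =>
    have hu : (u : ℕ) + 1 < n := by omega
    obtain ⟨p, hp⟩ := ih ⟨u + 1, hu⟩ (by dsimp only; omega) (by dsimp only; omega)
    exact ⟨.cons (pathGraph_adj.mpr (.inl rfl)) p, by simp [hp]⟩

lemma Walk.natDist_le_length_pathGraph {u v : Fin n} (p : (pathGraph n).Walk u v) :
    Nat.dist u v ≤ p.length := by
  induction p with
  | nil => simp
  | @cons a b c hadj p ih =>
    have hab : Nat.dist a b = 1 := by
      rw [pathGraph_adj] at hadj; unfold Nat.dist; omega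
    calc Nat.dist a c ≤ Nat.dist a b + Nat.dist b c := Nat.dist.triangle_inequality _ _ _
      _ ≤ p.length + 1 := by omega
      _ = _ := (Walk.length_cons _ _).symm

theorem pathGraph_dist (u v : Fin n) : (pathGraph n).dist u v = Nat.dist u v := by
  refine le_antisymm ?_ ?_
  · wlog h : (u : ℕ) ≤ v generalizing u v
    · rw [dist_comm, Nat.dist_comm]; exact this v u (by omega)
    obtain ⟨p, hp⟩ := pathGraph_exists_walk_length_eq u v h
    exact (dist_le p).trans (by rw [hp, Nat.dist]; omega)
  · obtain ⟨p, hp⟩ := (pathGraph_preconnected n u v).exists_walk_length_eq_dist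
    exact hp ▸ p.natDist_le_length_pathGraph

end SimpleGraph

section PathGraph

variable {n : ℕ}

lemma closerCount_pathGraph_of_lt {u v : Fin n} (h : u < v) :
    closerCount (pathGraph n) u v = (u + v + 1) / 2 := by
  have hcloser (w : Fin n) :
      (pathGraph n).dist w u < (pathGraph n).dist w v ↔ (w : ℕ) < (u + v + 1) / 2 := by
    rw [pathGraph_dist, pathGraph_dist]; unfold Nat.dist; omega
  rw [closerCount, filter_congr fun w _ => hcloser w, Fin.card_filter_val_lt]
  omega

lemma closerCount_pathGraph_of_gt {u v : Fin n} (h : v < u) :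
    closerCount (pathGraph n) u v = n - 1 - (u + v) / 2 := by
  have hcloser (w : Fin n) :
      (pathGraph n).dist w u < (pathGraph n).dist w v ↔ ¬ (w : ℕ) < (u + v) / 2 + 1 := by
    rw [pathGraph_dist, pathGraph_dist]; unfold Nat.dist; omega
  have hsplit :=
    card_filter_add_card_filter_not (s := univ) fun w : Fin n => (w : ℕ) < (u + v) / 2 + 1
  rw [Fin.card_filter_val_lt, card_univ, Fintype.card_fin] at hsplit
  rw [closerCount, filter_congr fun w _ => hcloser w]
  omega

lemma closerCount_pathGraph_eq_comm_iff {u v : Fin n} :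
    closerCount (pathGraph n) u v = closerCount (pathGraph n) v u ↔
      u = v ∨ (u + v + 1 : ℕ) = n := by
  rcases lt_trichotomy u v with h | rfl | h
  · rw [closerCount_pathGraph_of_lt h, closerCount_pathGraph_of_gt h]; omega
  · simp
  · rw [closerCount_pathGraph_of_gt h, closerCount_pathGraph_of_lt h]; omega

end PathGraph

lemma Fin.card_filter_eq_or_add_add_one_eq (n : ℕ) :
    #{p : Fin n × Fin n | p.1 = p.2 ∨ (p.1 + p.2 + 1 : ℕ) = n} + n % 2 = 2 * n := by
  have hdiag : #{p : Fin n × Fin n | p.1 = p.2} = n :=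
    (card_nbij' Prod.fst (fun u => (u, u)) (by simp [Set.MapsTo]) (by simp [Set.MapsTo])
      (by simp [Set.LeftInvOn]) (by simp [Set.RightInvOn, Set.LeftInvOn])).trans (card_fin n)
  have hantidiag : #{p : Fin n × Fin n | (p.1 + p.2 + 1 : ℕ) = n} = n := by
    refine (card_nbij' Prod.fst (fun u => (u, u.rev)) (by simp [Set.MapsTo]) ?_ ?_ ?_).trans
      (card_fin n)
    · intro u
      simp only [coe_filter, mem_univ, true_and, Set.mem_ofPred_eq, Fin.val_rev]
      omega
    · rintro ⟨a, b⟩ hab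
      simp only [coe_filter, mem_univ, true_and, Set.mem_ofPred_eq] at hab
      exact Prod.ext rfl (Fin.ext (by dsimp only; rw [Fin.val_rev]; omega))
    · intro u
      simp
  have hcenter : #{p : Fin n × Fin n | p.1 = p.2 ∧ (p.1 + p.2 + 1 : ℕ) = n} = n % 2 := by
    rcases Nat.even_or_odd' n with ⟨m, rfl | rfl⟩
    · rw [Nat.mul_mod_right, card_eq_zero, filter_eq_empty_iff]
      rintro p - ⟨hp, h⟩
      rw [hp] at h
      omega
    · rw [Nat.mul_add_mod_self_left, card_eq_one]
      exact ⟨(⟨m, by omega⟩, ⟨m, by omega⟩), by ext ⟨a, b⟩; simp [Fin.ext_iff]; omega⟩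
  rw [filter_or, ← hcenter, filter_and, card_union_add_card_inter, hdiag, hantidiag, two_mul]

theorem peri_pathGraph (n : ℕ) :
    (Even n → (peri (SimpleGraph.pathGraph n) : ℚ) = (n : ℚ) * ((n : ℚ) - 2) / 2) ∧
    (Odd n → (peri (SimpleGraph.pathGraph n) : ℚ) = ((n : ℚ) - 1) ^ 2 / 2) := by
  have hperi := two_mul_peri_add_card_filter_closerCount_eq (pathGraph n)
  simp only [closerCount_pathGraph_eq_comm_iff, Fintype.card_fin] at hperi
  have hbalanced := Fin.card_filter_eq_or_add_add_one_eq n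
  have htwice : (2 * peri (pathGraph n) : ℚ) = n ^ 2 - 2 * n + (n % 2 : ℕ) := by
    have hperi' := congrArg (Nat.cast : ℕ → ℚ) hperi
    have hbalanced' := congrArg (Nat.cast : ℕ → ℚ) hbalanced
    push_cast at hperi' hbalanced' ⊢
    linarith
  refine ⟨fun h => ?_, fun h => ?_⟩
  · rw [Nat.even_iff.mp h, Nat.cast_zero] at htwice
    linear_combination htwice / 2
  · rw [Nat.odd_iff.mp h, Nat.cast_one] at htwice
    linear_combination htwice / 2
end
end

section
/- For all integers a ≥ 2 and b ≥ 1, setting n = 1 + ab, the balanced spider S_{a,b} satisfies peri(S_{a,b}) = C(n,2) − b·C(a,2), where C(m,2) = m(m−1)/2 denotes a binomial coefficient. -/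
open SimpleGraph Finset

attribute [local instance] Classical.propDecidable

noncomputable section

/-! In a spider, two vertices on a common leg are at distance the difference of their depths, and
otherwise at distance the sum of their depths. In the balanced spider `S_{a,b}` with `a ≥ 2` this
makes `u` win against `v` (more vertices strictly closer to `u`) exactly when `u` is shallower:
the vertices strictly closer to the deeper `v` lie on the leg of `v`, at most `b` of them, while
the `1 + (a - 1) b > b` vertices off that leg are strictly closer to `u`; two vertices of equal
depth are exchanged by swapping their legs. So `peri` counts the unordered pairs of vertices of
distinct depth: all `C(n,2)` pairs except the `C(a,2)` pairs inside each of the `b` levels. -/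

namespace SimpleGraph

variable {V : Type*} {G : SimpleGraph V}

lemma le_add_length_of_adj_le_succ (f : V → ℕ) (hf : ∀ x y, G.Adj x y → f x ≤ f y + 1)
    {u v : V} (p : G.Walk u v) : f u ≤ f v + p.length := by
  induction p with
  | nil => simp
  | cons h _ ih => have := hf _ _ h; rw [Walk.length_cons]; omega

lemma exists_walk_length_le_of_exists_adj_lt (f : V → ℕ) {w : V}
    (hf : ∀ x, x ≠ w → ∃ y, G.Adj x y ∧ f y < f x) (x : V) :
    ∃ p : G.Walk x w, p.length ≤ f x := by
  induction hn : f x using Nat.strong_induction_on generalizing x with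
  | _ n ih =>
    by_cases hx : x = w
    · subst hx
      exact ⟨.nil, by simp⟩
    · obtain ⟨y, hxy, hy⟩ := hf x hx
      obtain ⟨p, hp⟩ := ih _ (hn ▸ hy) y rfl
      exact ⟨.cons hxy p, by rw [Walk.length_cons]; omega⟩

lemma dist_eq_of_adj_le_succ_of_exists_adj_lt (f : V → ℕ) {w : V} (hw : f w = 0)
    (hle : ∀ x y, G.Adj x y → f x ≤ f y + 1) (hlt : ∀ x, x ≠ w → ∃ y, G.Adj x y ∧ f y < f x)
    (x : V) : G.dist x w = f x := by
  obtain ⟨p, hp⟩ := exists_walk_length_le_of_exists_adj_lt f hlt x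
  obtain ⟨q, hq⟩ := p.reachable.exists_walk_length_eq_dist
  have := le_add_length_of_adj_le_succ f hle q
  have := dist_le p
  omega

end SimpleGraph

lemma closerCount_apply_apply {V : Type*} [Fintype V] (G : SimpleGraph V) (φ : V ≃ V)
    (hφ : ∀ x y, G.dist (φ x) (φ y) = G.dist x y) (u v : V) :
    closerCount G (φ u) (φ v) = closerCount G u v := by
  have h (w x : V) : G.dist w (φ x) = G.dist (φ.symm w) x := by
    rw [← hφ (φ.symm w) x, φ.apply_symm_apply]
  simp only [closerCount, h]
  exact card_equiv φ.symm (by simp)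

namespace Spider

variable {k : ℕ} {L : Fin k → ℕ}

def depth : Option ((i : Fin k) × Fin (L i)) → ℕ
  | none => 0
  | some p => p.2 + 1

@[simp]
lemma depth_none : depth (none : Option ((i : Fin k) × Fin (L i))) = 0 := rfl

@[simp]
lemma depth_some (p : (i : Fin k) × Fin (L i)) : depth (some p) = p.2 + 1 := rfl

def distFormula : Option ((i : Fin k) × Fin (L i)) → Option ((i : Fin k) × Fin (L i)) → ℕ
  | some p, some q => if p.1 = q.1 then Nat.dist p.2 q.2 else p.2 + q.2 + 2
  | u, v => depth u + depth v

lemma adj_none_zero (i : Fin k) (h : 0 < L i) : (spider k L).Adj none (some ⟨i, ⟨0, h⟩⟩) := by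
  rw [spider, fromRel_adj]
  exact ⟨by simp, .inl (.inl ⟨i, ⟨0, h⟩, rfl, rfl, rfl⟩)⟩

lemma adj_succ (i : Fin k) (j : ℕ) (h : j + 1 < L i) :
    (spider k L).Adj (some ⟨i, ⟨j, by omega⟩⟩) (some ⟨i, ⟨j + 1, h⟩⟩) := by
  rw [spider, fromRel_adj]
  exact ⟨by simp, .inl (.inr ⟨i, ⟨j, by omega⟩, ⟨j + 1, h⟩, rfl, rfl, rfl⟩)⟩

lemma distFormula_le_succ_of_adj {x y : Option ((i : Fin k) × Fin (L i))}
    (h : (spider k L).Adj x y) (w : Option ((i : Fin k) × Fin (L i))) :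
    distFormula x w ≤ distFormula y w + 1 := by
  rw [spider, fromRel_adj] at h
  obtain ⟨-, h | h⟩ := h <;>
    obtain ⟨i, j, rfl, rfl, hj⟩ | ⟨i, j, j', rfl, rfl, hj⟩ := h <;>
    rcases w with _ | ⟨i', r⟩ <;> simp only [distFormula, depth, Nat.dist] <;> (try split_ifs) <;>
    omega

lemma exists_adj_distFormula_lt {x w : Option ((i : Fin k) × Fin (L i))} (hx : x ≠ w) :
    ∃ y, (spider k L).Adj x y ∧ distFormula y w < distFormula x w := by
  rcases x with _ | ⟨i, ⟨j, hj⟩⟩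
  · obtain ⟨⟨i, r⟩, rfl⟩ := Option.ne_none_iff_exists'.mp hx.symm
    exact ⟨_, adj_none_zero i r.pos, by simp [distFormula, depth, Nat.dist]⟩
  by_cases hout : ∃ r : Fin (L i), w = some ⟨i, r⟩ ∧ j < r
  · obtain ⟨r, rfl, hr⟩ := hout
    exact ⟨_, adj_succ i j (by omega), by simp only [distFormula, ↓reduceIte, Nat.dist]; omega⟩
  push Not at hout
  rcases j with _ | j
  · refine ⟨none, (adj_none_zero i hj).symm, ?_⟩
    rcases w with _ | ⟨i', r⟩
    · simp [distFormula, depth]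
    by_cases hi : i = i'
    · subst hi
      have : (r : ℕ) ≠ 0 := fun h => hx (by simp [Fin.ext_iff, h])
      have := hout r rfl
      omega
    · simp [distFormula, depth, hi]
  · refine ⟨_, (adj_succ i j hj).symm, ?_⟩
    rcases w with _ | ⟨i', r⟩
    · simp [distFormula, depth]
    by_cases hi : i = i'
    · subst hi
      have := hout r rfl
      have : (r : ℕ) ≠ j + 1 := fun h => hx (by simp [Fin.ext_iff, h])
      simp only [distFormula, ↓reduceIte, Nat.dist]
      omega
    · simp [distFormula, hi]

lemma distFormula_self (u : Option ((i : Fin k) × Fin (L i))) : distFormula u u = 0 := by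
  rcases u with _ | ⟨i, r⟩ <;> simp [distFormula, depth]

lemma distFormula_le_depth_add (u v : Option ((i : Fin k) × Fin (L i))) :
    distFormula u v ≤ depth u + depth v := by
  rcases u with _ | ⟨i, r⟩ <;> rcases v with _ | ⟨i', r'⟩ <;>
    simp only [distFormula, depth, Nat.dist] <;> (try split_ifs) <;> omega

lemma dist_spider (u v : Option ((i : Fin k) × Fin (L i))) :
    (spider k L).dist u v = distFormula u v :=
  dist_eq_of_adj_le_succ_of_exists_adj_lt (distFormula · v) (distFormula_self v)
    (fun _ _ h => distFormula_le_succ_of_adj h v) (fun _ hx => exists_adj_distFormula_lt hx) u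

section Balanced

variable {a b : ℕ}

def relabelLegs (σ : Equiv.Perm (Fin a)) : Equiv.Perm (Option ((_ : Fin a) × Fin b)) :=
  Equiv.optionCongr (Equiv.sigmaCongrLeft (β := fun _ => Fin b) σ)

lemma distFormula_relabelLegs (σ : Equiv.Perm (Fin a)) (u v : Option ((_ : Fin a) × Fin b)) :
    distFormula (relabelLegs σ u) (relabelLegs σ v) = distFormula u v := by
  rcases u with _ | ⟨i, r⟩ <;> rcases v with _ | ⟨i', r'⟩ <;>
    simp [relabelLegs, distFormula, depth, σ.injective.eq_iff]

lemma closerCount_comm_of_depth_eq {u v : Option ((_ : Fin a) × Fin b)} (h : depth u = depth v) :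
    closerCount (spider a fun _ => b) u v = closerCount (spider a fun _ => b) v u := by
  rcases u with _ | ⟨i, r⟩ <;> rcases v with _ | ⟨j, s⟩
  · rfl
  all_goals simp only [depth_none, depth_some, Nat.add_right_cancel_iff, reduceCtorEq] at h
  obtain rfl : r = s := Fin.ext h
  have hσ : ∀ x y, (spider a fun _ => b).dist (relabelLegs (.swap i j) x)
      (relabelLegs (.swap i j) y) = (spider a fun _ => b).dist x y := by
    intro x y
    simp only [dist_spider, distFormula_relabelLegs]
  simpa [relabelLegs] using (closerCount_apply_apply _ _ hσ (some ⟨i, r⟩) (some ⟨j, r⟩)).symm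

lemma closerCount_lt_of_depth_lt (ha : 2 ≤ a) {u v : Option ((_ : Fin a) × Fin b)}
    (h : depth u < depth v) :
    closerCount (spider a fun _ => b) v u < closerCount (spider a fun _ => b) u v := by
  obtain ⟨⟨i, q⟩, rfl⟩ : ∃ p, v = some p :=
    Option.ne_none_iff_exists'.mp (by rintro rfl; simp [depth] at h)
  set leg : Finset (Option ((_ : Fin a) × Fin b)) := univ.image fun r => some ⟨i, r⟩
  have hleg : #leg = b := by
    rw [card_image_of_injective _ (fun r s h => by simpa using h), card_univ, Fintype.card_fin]
  have hoff : ∀ w ∉ leg, distFormula w u < distFormula w (some ⟨i, q⟩) := by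
    rintro (_ | ⟨i', r⟩) hw
    · simpa [distFormula] using h
    · have hi : i' ≠ i := by rintro rfl; simp [leg] at hw
      have := distFormula_le_depth_add (some ⟨i', r⟩) u
      simp only [distFormula, depth, if_neg hi] at this h ⊢
      omega
  have hfar : closerCount (spider a fun _ => b) (some ⟨i, q⟩) u ≤ #leg := by
    refine card_le_card fun w hw => ?_
    by_contra hw'
    simp only [mem_filter, dist_spider] at hw
    exact absurd (hoff w hw') (by omega)
  have hnear : #legᶜ ≤ closerCount (spider a fun _ => b) u (some ⟨i, q⟩) := by
    refine card_le_card fun w hw => ?_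
    simpa [dist_spider] using hoff w (by simpa using hw)
  rw [card_compl, hleg] at hnear
  simp only [Fintype.card_option, Fintype.card_sigma, Fintype.card_fin, sum_const, card_univ,
    smul_eq_mul] at hnear
  have := Nat.mul_le_mul_right b ha
  omega

lemma periVertex_eq_card_depth_lt (ha : 2 ≤ a) (v : Option ((_ : Fin a) × Fin b)) :
    periVertex (spider a fun _ => b) v =
      #{u : Option ((_ : Fin a) × Fin b) | depth u < depth v} := by
  rw [periVertex]
  congr 1
  ext u
  simp only [mem_filter, mem_univ, true_and]
  refine ⟨fun ⟨_, hlt⟩ => ?_, fun h => ?_⟩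
  · rcases lt_trichotomy (depth u) (depth v) with h | h | h
    · exact h
    · exact absurd (closerCount_comm_of_depth_eq h) hlt.ne'
    · exact absurd (closerCount_lt_of_depth_lt ha h) hlt.not_gt
  · exact ⟨by rintro rfl; exact h.false, closerCount_lt_of_depth_lt ha h⟩

lemma card_depth_lt_depth_some (p : (_ : Fin a) × Fin b) :
    #{u : Option ((_ : Fin a) × Fin b) | depth u < depth (some p)} = 1 + a * p.2 := by
  rw [card_filter, Fintype.sum_option, Fintype.sum_sigma]
  simp only [depth_none, depth_some, Nat.add_lt_add_iff_right, ← card_filter,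
    Fin.card_filter_val_lt]
  simp [p.2.isLt.le]

lemma peri_balancedSpider_eq (ha : 2 ≤ a) :
    peri (spider a fun _ => b) = a * (b + a * b.choose 2) := by
  simp only [peri, periVertex_eq_card_depth_lt ha, Fintype.sum_option, Fintype.sum_sigma,
    card_depth_lt_depth_some, depth_none, Nat.not_lt_zero, filter_false, card_empty, zero_add,
    sum_add_distrib, ← mul_sum, Fin.sum_univ_eq_sum_range (fun q => q), sum_range_id,
    ← Nat.choose_two_right, sum_const, card_univ, Fintype.card_fin, smul_eq_mul, mul_one,
    Fintype.card_sigma]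
  ring

end Balanced

end Spider

theorem peri_balancedSpider_general (a b : ℕ) (ha : 2 ≤ a)
    (n : ℕ) (hn : n = 1 + a * b) :
    (peri (spider a fun _ => b) : ℤ) = (n.choose 2 : ℤ) - (b : ℤ) * (a.choose 2 : ℤ) := by
  subst hn
  apply Int.cast_injective (α := ℚ)
  push_cast [Spider.peri_balancedSpider_eq ha, Nat.cast_choose_two]
  ring

theorem peri_balancedSpider (a b : ℕ) (ha : 2 ≤ a) (hb : 1 ≤ b)
    (n : ℕ) (hn : n = 1 + a * b) :
    (peri (spider a fun _ => b) : ℤ) = (n.choose 2 : ℤ) - (b : ℤ) * (a.choose 2 : ℤ) :=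
  peri_balancedSpider_general a b ha n hn
end
end

section
/- For every integer n ≥ 3: for every connected simple graph G on n vertices and every vertex v of G, peri(v) + deg(v) ≤ 2n − 4, and there exist a connected graph G of order n and a vertex v of G with peri(v) + deg(v) = 2n − 4. -/
open SimpleGraph Finset

attribute [local instance] Classical.propDecidable

noncomputable section

/-!
If every vertex other than `u` and `v` is a neighbour of `v`, then only `u` itself is strictly
closer to `u` than to `v`, so `u` does not count towards `peri v`. When `v` has no non-neighbour
this makes `peri v = 0`; when `v` has exactly one non-neighbour `x`, it excludes `x`, so
`peri v ≤ n - 2 = deg v`; otherwise `deg v ≤ n - 3` and `peri v ≤ n - 1`. The bound is attained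
by `K_n` minus an edge `ab` at the vertex `a`.
-/

section UpperBound

variable {V : Type*} [Fintype V] {G : SimpleGraph V} {u v : V}

lemma one_le_closerCount (hG : G.Connected) (huv : u ≠ v) : 1 ≤ closerCount G u v :=
  card_pos.mpr ⟨u, by simpa using hG.pos_dist_of_ne huv⟩

lemma closerCount_le_one (hG : G.Connected) (h : ∀ w, w ≠ u → w ≠ v → G.Adj v w) :
    closerCount G u v ≤ 1 := by
  have hsub : univ.filter (fun w => G.dist w u < G.dist w v) ⊆ {u} := by
    intro w hw
    rw [mem_filter] at hw
    rw [mem_singleton]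
    by_contra hwu
    have hwv : w ≠ v := by rintro rfl; simp at hw
    have h1 : G.dist w v = 1 := dist_eq_one_iff_adj.mpr (h w hwu hwv).symm
    have h2 : 0 < G.dist w u := hG.pos_dist_of_ne hwu
    omega
  exact (card_le_card hsub).trans_eq (card_singleton u)

lemma closerCount_le_closerCount (hG : G.Connected) (huv : u ≠ v)
    (h : ∀ w, w ≠ u → w ≠ v → G.Adj v w) : closerCount G u v ≤ closerCount G v u :=
  (closerCount_le_one hG h).trans (one_le_closerCount hG huv.symm)

lemma periVertex_le_card_sub_one (G : SimpleGraph V) (v : V) :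
    periVertex G v ≤ Fintype.card V - 1 := by
  rw [← card_univ, ← card_erase_of_mem (mem_univ v)]
  exact card_le_card fun u hu => mem_erase.mpr ⟨(mem_filter.mp hu).2.1, mem_univ u⟩

lemma periVertex_le_card_sub_two (hG : G.Connected) (huv : u ≠ v)
    (h : ∀ w, w ≠ u → w ≠ v → G.Adj v w) : periVertex G v ≤ Fintype.card V - 2 := by
  rw [← card_pair huv, ← card_compl]
  refine card_le_card fun w hw => ?_
  obtain ⟨hwv, hlt⟩ := (mem_filter.mp hw).2
  have hwu : w ≠ u := by
    rintro rfl
    exact (closerCount_le_closerCount hG huv h).not_gt hlt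
  simp [hwu, hwv]

lemma periVertex_eq_zero (hG : G.Connected) (h : ∀ w, w ≠ v → G.Adj v w) :
    periVertex G v = 0 :=
  card_eq_zero.mpr <| filter_eq_empty_iff.mpr fun _ _ ⟨huv, hlt⟩ =>
    (closerCount_le_closerCount hG huv fun w _ hwv => h w hwv).not_gt hlt

lemma adj_of_notMem_neighborFinset_compl {w : V} (hwv : w ≠ v)
    (hw : w ∉ Gᶜ.neighborFinset v) : G.Adj v w := by
  simpa [hwv.symm] using hw

theorem periVertex_add_degree_le (hV : 3 ≤ Fintype.card V) (hG : G.Connected) (v : V) :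
    periVertex G v + G.degree v ≤ 2 * Fintype.card V - 4 := by
  have hdeg := G.degree_compl (v := v)
  have hlt := G.degree_lt_card_verts v
  obtain h0 | h1 | h2 : Gᶜ.degree v = 0 ∨ Gᶜ.degree v = 1 ∨ 2 ≤ Gᶜ.degree v := by omega
  · have hempty : Gᶜ.neighborFinset v = ∅ := card_eq_zero.mp h0
    have hperi : periVertex G v = 0 := periVertex_eq_zero hG fun w hwv =>
      adj_of_notMem_neighborFinset_compl hwv (by simp [hempty])
    omega
  · obtain ⟨x, hx⟩ := card_eq_one.mp h1
    have hxv : x ≠ v := (Gᶜ.mem_neighborFinset v x).mp (hx ▸ mem_singleton_self x) |>.ne'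
    have hperi := periVertex_le_card_sub_two hG hxv fun w hwx hwv =>
      adj_of_notMem_neighborFinset_compl hwv (by simp [hx, hwx])
    omega
  · have hperi := periVertex_le_card_sub_one G v
    omega

end UpperBound

section Extremal

variable {V : Type*} {a b : V}

lemma connected_top_sdiff_edge {c : V} (hca : c ≠ a) (hcb : c ≠ b) :
    (⊤ \ edge a b : SimpleGraph V).Connected := by
  refine (connected_iff_exists_forall_reachable _).mpr ⟨c, fun w => ?_⟩
  by_cases hwc : w = c
  · subst hwc
    rfl
  · refine Adj.reachable ?_
    simp only [sdiff_adj, top_adj, edge_adj]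
    grind

variable [Fintype V]

lemma degree_top_sdiff_edge (hab : a ≠ b) :
    (⊤ \ edge a b : SimpleGraph V).degree a = Fintype.card V - 2 := by
  rw [← card_pair hab, ← card_compl, ← card_neighborFinset_eq_degree]
  congr 1
  ext w
  simp only [mem_neighborFinset, sdiff_adj, top_adj, edge_adj, mem_compl, mem_insert,
    mem_singleton]
  grind

lemma periVertex_top_sdiff_edge (hab : a ≠ b) (hG : (⊤ \ edge a b : SimpleGraph V).Connected) :
    periVertex (⊤ \ edge a b) a = Fintype.card V - 2 := by
  set G : SimpleGraph V := ⊤ \ edge a b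
  have hadj : ∀ x y, G.Adj x y ↔ x ≠ y ∧ ¬(x = a ∧ y = b ∨ x = b ∧ y = a) := by
    intro x y
    simp only [G, sdiff_adj, top_adj, edge_adj]
    tauto
  refine le_antisymm (periVertex_le_card_sub_two hG hab.symm fun w hwb hwa =>
    (hadj a w).mpr (by grind)) ?_
  rw [← card_pair hab, ← card_compl]
  refine card_le_card fun u hu => ?_
  have hua : u ≠ a := by simp_all
  have hub : u ≠ b := by simp_all
  have hsmall : closerCount G a u ≤ 1 :=
    closerCount_le_one hG fun w hwa _ => (hadj u w).mpr (by grind)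
  have hcloser : ({u, b} : Finset V) ⊆ univ.filter fun w => G.dist w u < G.dist w a := by
    intro w hw
    rw [mem_insert, mem_singleton] at hw
    rcases hw with rfl | rfl
    · simpa using hG.pos_dist_of_ne hua
    · have hbu : G.dist w u = 1 := dist_eq_one_iff_adj.mpr ((hadj w u).mpr (by grind))
      have hba : 1 < G.dist w a :=
        hG.one_lt_dist_of_ne_of_not_adj hab.symm (by rw [hadj]; tauto)
      simp [hbu, hba]
  have htwo : 2 ≤ closerCount G u a := by
    simpa [closerCount, card_pair hub] using card_le_card hcloser
  simp only [mem_filter, mem_univ, true_and]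
  exact ⟨hua, by omega⟩

theorem exists_connected_periVertex_add_degree_eq {c : V} (hab : a ≠ b) (hca : c ≠ a)
    (hcb : c ≠ b) : ∃ (G : SimpleGraph V) (v : V), G.Connected ∧
      periVertex G v + G.degree v = 2 * Fintype.card V - 4 := by
  have hG := connected_top_sdiff_edge hca hcb
  refine ⟨⊤ \ edge a b, a, hG, ?_⟩
  -- `convert` reconciles the concrete decidability instance of `(⊤ \ edge a b).Adj` with the
  -- classical one under which the degree in the goal is computed.
  convert (by omega : Fintype.card V - 2 + (Fintype.card V - 2) = 2 * Fintype.card V - 4)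
    using 2
  · exact periVertex_top_sdiff_edge hab hG
  · convert degree_top_sdiff_edge hab

end Extremal

theorem periVertex_add_degree_max (n : ℕ) (hn : 3 ≤ n) :
    (∀ (V : Type) [Fintype V], Fintype.card V = n →
      ∀ G : SimpleGraph V, G.Connected → ∀ v : V,
        periVertex G v + G.degree v ≤ 2 * n - 4) ∧
    (∃ (G : SimpleGraph (Fin n)) (v : Fin n), G.Connected ∧
      periVertex G v + G.degree v = 2 * n - 4) := by
  refine ⟨fun V _ hV G hG v => hV ▸ periVertex_add_degree_le (hV ▸ hn) hG v, ?_⟩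
  simpa using exists_connected_periVertex_add_degree_eq (a := (⟨0, by omega⟩ : Fin n))
    (b := ⟨1, by omega⟩) (c := ⟨2, by omega⟩) (by simp) (by simp) (by simp)
end
end

section
/- For every integer n ≥ 5: for every tree T of order n and every vertex v of T, peri(v) + deg(v) ≤ n, and there exist a tree T of order n and a vertex v of T with peri(v) + deg(v) = n. -/
/-! Along an edge `uv` of a tree every vertex is strictly closer to exactly one endpoint, so
`n(u, v) + n(v, u) = n`, and the vertices closer to a neighbour `u` of `v` than to `v` form
disjoint sets for different neighbours. Hence at most one neighbour `u` of `v` has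
`n(u, v) > n(v, u)`, and `peri(v) ≤ (n - 1 - deg v) + 1`.

Equality holds at the leaf `a` of the broom `a - b - c` with the remaining `n - 3` vertices
hanging from `c`: every `w ∉ {a, b}` is strictly closer to any `u ≠ a` than to `a`, so
`n(a, u) ≤ 2 < n - 2 ≤ n(u, a)` as soon as `n ≥ 5`. -/

open SimpleGraph Finset

attribute [local instance] Classical.propDecidable

noncomputable section

namespace SimpleGraph

variable {V : Type*} {G : SimpleGraph V} {u v w : V}

theorem IsAcyclic.eq_of_isPath (hG : G.IsAcyclic) {p q : G.Walk u v} (hp : p.IsPath)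
    (hq : q.IsPath) : p = q :=
  congrArg Subtype.val ((hG.subsingleton_path u v).elim ⟨p, hp⟩ ⟨q, hq⟩)

theorem IsAcyclic.dist_eq_length_of_isPath (hG : G.IsAcyclic) {p : G.Walk u v}
    (hp : p.IsPath) : G.dist u v = p.length := by
  obtain ⟨q, hq, hql⟩ := p.reachable.exists_path_of_dist
  rw [← hql, hG.eq_of_isPath hq hp]

theorem IsAcyclic.penultimate_eq_of_adj_of_dist_lt (hG : G.IsAcyclic) {p : G.Walk w v}
    (hp : p.IsPath) (hadj : G.Adj u v) (h : G.dist w u < G.dist w v) : p.penultimate = u := by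
  obtain ⟨q, hq, hql⟩ := (p.reachable.trans hadj.symm.reachable).exists_path_of_dist
  have hv : v ∉ q.support := fun hv => by
    have := (dist_le (q.takeUntil v hv)).trans (q.length_takeUntil_le_length hv)
    omega
  rw [hG.eq_of_isPath hp (hq.concat hv hadj), Walk.penultimate_concat]

theorem IsAcyclic.eq_of_adj_of_dist_lt (hG : G.IsAcyclic) {u' : V} (hu : G.Adj u v)
    (hu' : G.Adj u' v) (h : G.dist w u < G.dist w v) (h' : G.dist w u' < G.dist w v) :
    u = u' := by
  obtain ⟨p, hp, -⟩ :=
    (Reachable.of_dist_ne_zero (by omega : G.dist w v ≠ 0)).exists_path_of_dist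
  rw [← hG.penultimate_eq_of_adj_of_dist_lt hp hu h, hG.penultimate_eq_of_adj_of_dist_lt hp hu' h']

end SimpleGraph

section Peripherality

variable {V : Type*} [Fintype V] {T : SimpleGraph V} {u u' v : V}

theorem closerCount_add_closerCount_of_adj (hT : T.IsTree) (huv : T.Adj u v) :
    closerCount T u v + closerCount T v u = Fintype.card V := by
  have hcompl : ∀ w, T.dist w v < T.dist w u ↔ ¬T.dist w u < T.dist w v := fun w => by
    rcases hT.dist_eq_dist_add_one_of_adj w huv with h | h <;> omega
  rw [closerCount, closerCount, filter_congr fun w _ => hcompl w,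
    card_filter_add_card_filter_not, card_univ]

theorem closerCount_add_closerCount_le_of_adj (hT : T.IsTree) (hu : T.Adj u v)
    (hu' : T.Adj u' v) (hne : u ≠ u') :
    closerCount T u v + closerCount T u' v ≤ Fintype.card V := by
  rw [closerCount, closerCount, ← card_union_of_disjoint]
  · exact card_le_univ _
  · exact disjoint_filter.2 fun w _ h h' => hne (hT.isAcyclic.eq_of_adj_of_dist_lt hu hu' h h')

theorem card_neighborFinset_filter_closerCount_lt_le_one (hT : T.IsTree) (v : V) :
    #{u ∈ T.neighborFinset v | closerCount T v u < closerCount T u v} ≤ 1 := by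
  refine card_le_one.2 fun a ha b hb => by_contra fun hab => ?_
  simp only [mem_filter, mem_neighborFinset] at ha hb
  have := closerCount_add_closerCount_of_adj hT ha.1.symm
  have := closerCount_add_closerCount_of_adj hT hb.1.symm
  have := closerCount_add_closerCount_le_of_adj hT ha.1.symm hb.1.symm hab
  omega

theorem periVertex_add_degree_le_s18 (hT : T.IsTree) (v : V) :
    periVertex T v + T.degree v ≤ Fintype.card V := by
  have hN : T.neighborFinset v ⊆ univ.erase v := fun u hu => by
    simpa using ((T.mem_neighborFinset v u).1 hu).ne'
  have hperi : periVertex T v ≤ #(univ.erase v \ T.neighborFinset v) + 1 := by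
    refine (card_le_card fun u hu => ?_).trans ((card_union_le _ _).trans
      (add_le_add le_rfl (card_neighborFinset_filter_closerCount_lt_le_one hT v)))
    by_cases hu' : u ∈ T.neighborFinset v <;> simp_all
  rw [card_sdiff_of_subset hN, card_erase_of_mem (mem_univ v), card_univ] at hperi
  have := card_le_card hN
  rw [card_erase_of_mem (mem_univ v), card_univ] at this
  have := Fintype.card_pos_iff.2 ⟨v⟩
  rw [← card_neighborFinset_eq_degree]
  omega

end Peripherality

section Broom

variable {V : Type*} {a b c : V}

/-- The path `a - b - c` with every other vertex attached to `c` as a leaf. -/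
def broom (a b c : V) : SimpleGraph V :=
  (starGraph c \ edge a c) ⊔ edge a b

theorem broom_adj (hac : a ≠ c) {x y : V} : (broom a b c).Adj x y ↔
    x ≠ y ∧ ((x = c ∨ y = c) ∧ ¬(x = a ∨ y = a) ∨ (x = a ∧ y = b ∨ x = b ∧ y = a)) := by
  simp only [broom, sup_adj, sdiff_adj, starGraph_adj, edge_adj]
  grind

theorem isTree_broom (hab : a ≠ b) (hac : a ≠ c) (hbc : b ≠ c) : (broom a b c).IsTree := by
  refine ⟨(connected_iff_exists_forall_reachable _).2 ⟨c, fun x => ?_⟩, ?_⟩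
  · have hcb : (broom a b c).Adj c b := (broom_adj hac).2 (by grind)
    by_cases hxc : x = c
    · rw [hxc]
    by_cases hxa : x = a
    · exact hcb.reachable.trans ((broom_adj hac).2 (by grind)).reachable
    · exact ((broom_adj hac).2 (by grind)).reachable
  · refine ((isAcyclic_starGraph c).anti sdiff_le).sup_edge_of_not_reachable
      (not_reachable_of_neighborSet_left_eq_empty hab ?_)
    ext x
    simp only [sdiff_adj, starGraph_adj, edge_adj, mem_neighborSet, Set.mem_empty_iff_false]
    grind

theorem dist_broom_center_le_one (hac : a ≠ c) {u : V} (hua : u ≠ a) :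
    (broom a b c).dist c u ≤ 1 := by
  by_cases huc : u = c
  · simp [huc]
  · exact (dist_eq_one_iff_adj.2 ((broom_adj hac).2 (by grind))).le

theorem dist_broom_le_two (hab : a ≠ b) (hac : a ≠ c) (hbc : b ≠ c) {w u : V} (hwa : w ≠ a)
    (hua : u ≠ a) : (broom a b c).dist w u ≤ 2 := by
  have := (isTree_broom hab hac hbc).connected.dist_triangle (u := w) (v := c) (w := u)
  have hw := dist_broom_center_le_one (b := b) hac hwa
  have := dist_broom_center_le_one (b := b) hac hua
  rw [dist_comm] at hw
  omega

theorem dist_broom_center_left (hab : a ≠ b) (hac : a ≠ c) (hbc : b ≠ c) :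
    (broom a b c).dist c a = 2 := by
  have hcb : (broom a b c).Adj c b := (broom_adj hac).2 (by grind)
  have hba : (broom a b c).Adj b a := (broom_adj hac).2 (by grind)
  exact (isTree_broom hab hac hbc).isAcyclic.dist_eq_length_of_isPath
    (p := .cons hcb (.cons hba .nil)) (by simp; grind)

theorem dist_broom_left (hab : a ≠ b) (hac : a ≠ c) (hbc : b ≠ c) {w : V} (hwa : w ≠ a)
    (hwb : w ≠ b) (hwc : w ≠ c) : (broom a b c).dist w a = 3 := by
  have hwc' : (broom a b c).Adj w c := (broom_adj hac).2 (by grind)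
  have hcb : (broom a b c).Adj c b := (broom_adj hac).2 (by grind)
  have hba : (broom a b c).Adj b a := (broom_adj hac).2 (by grind)
  exact (isTree_broom hab hac hbc).isAcyclic.dist_eq_length_of_isPath
    (p := .cons hwc' (.cons hcb (.cons hba .nil))) (by simp; grind)

theorem dist_lt_dist_broom_left (hab : a ≠ b) (hac : a ≠ c) (hbc : b ≠ c) {u w : V}
    (hua : u ≠ a) (hwa : w ≠ a) (hwb : w ≠ b) :
    (broom a b c).dist w u < (broom a b c).dist w a := by
  by_cases hwc : w = c
  · subst hwc
    have := dist_broom_center_le_one (b := b) hac hua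
    have := dist_broom_center_left hab hac hbc
    omega
  · have := dist_broom_le_two hab hac hbc hwa hua
    have := dist_broom_left hab hac hbc hwa hwb hwc
    omega

variable [Fintype V]

theorem degree_broom_left (hab : a ≠ b) (hac : a ≠ c) : (broom a b c).degree a = 1 :=
  degree_eq_one_iff_existsUnique_adj.2 ⟨b, (broom_adj hac).2 (by grind), fun y hy => by
    grind [broom_adj]⟩

theorem closerCount_broom_left_lt (hab : a ≠ b) (hac : a ≠ c) (hbc : b ≠ c)
    (hV : 5 ≤ Fintype.card V) {u : V} (hua : u ≠ a) :
    closerCount (broom a b c) a u < closerCount (broom a b c) u a := by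
  have hle : closerCount (broom a b c) a u ≤ #{a, b} := card_le_card fun w hw => by
    by_contra hwab
    simp only [mem_filter, mem_univ, true_and, mem_insert, mem_singleton, not_or] at hw hwab
    exact (dist_lt_dist_broom_left hab hac hbc hua hwab.1 hwab.2).not_gt hw
  have hge : #(univ \ {a, b}) ≤ closerCount (broom a b c) u a := card_le_card fun w hw => by
    simp only [mem_sdiff, mem_univ, true_and, mem_insert, mem_singleton, not_or] at hw
    simpa using dist_lt_dist_broom_left hab hac hbc hua hw.1 hw.2
  rw [card_sdiff_of_subset (subset_univ _), card_univ, card_pair hab] at hge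
  rw [card_pair hab] at hle
  omega

theorem periVertex_broom_left (hab : a ≠ b) (hac : a ≠ c) (hbc : b ≠ c)
    (hV : 5 ≤ Fintype.card V) :
    periVertex (broom a b c) a = Fintype.card V - 1 := by
  rw [periVertex, ← card_univ, ← card_erase_of_mem (mem_univ a)]
  congr 1
  ext u
  simpa using fun hua => closerCount_broom_left_lt hab hac hbc hV hua

end Broom

theorem periVertex_add_degree_max_tree (n : ℕ) (hn : 5 ≤ n) :
    (∀ (V : Type) [Fintype V], Fintype.card V = n →
      ∀ T : SimpleGraph V, T.IsTree → ∀ v : V,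
        periVertex T v + T.degree v ≤ n) ∧
    (∃ (T : SimpleGraph (Fin n)) (v : Fin n), T.IsTree ∧
      periVertex T v + T.degree v = n) := by
  refine ⟨fun V _ hV T hT v => hV ▸ periVertex_add_degree_le_s18 hT v, ?_⟩
  let a : Fin n := ⟨0, by omega⟩
  let b : Fin n := ⟨1, by omega⟩
  let c : Fin n := ⟨2, by omega⟩
  have hab : a ≠ b := by simp [a, b, Fin.ext_iff]
  have hac : a ≠ c := by simp [a, c, Fin.ext_iff]
  have hbc : b ≠ c := by simp [b, c, Fin.ext_iff]
  have hV : 5 ≤ Fintype.card (Fin n) := by simpa using hn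
  refine ⟨broom a b c, a, isTree_broom hab hac hbc, ?_⟩
  rw [periVertex_broom_left hab hac hbc hV, degree_broom_left hab hac, Fintype.card_fin]
  omega
end
end
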